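/- arXiv:1008.5291 — 3 statements merged into one kernel-verified Lean document; each statement's English description precedes it below -/
import Mathlib

section
/- Let w : ℤ^r → ℤ^r be the linear map sending α_k to e_k - e_{k+1} for 1 ≤ k ≤ r-1 and α_r to e_{r-1} + e_r, where e_1,…,e_r is the standard basis. Then w maps Φ_{r,Z} bijectively onto the set {e_i - e_j : 1 ≤ i < j ≤ r} ∪ {e_i + e_j : 1 ≤ i < j ≤ r} ∪ {2e_j : j ∈ Z}. -/
/-- The standard basis vector `α_i` of `ℤ^r` (1-indexed). -/
def alphaV (r i : ℕ) : Fin r → ℤ := fun k => if (k : ℕ) + 1 = i then 1 else 0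

/-- `η_{i,j} = α_i + ⋯ + α_j` for `i ≤ j`, and `0` for `i > j` (1-indexed). -/
def eta (r i j : ℕ) : Fin r → ℤ := fun k => if i ≤ (k : ℕ) + 1 ∧ (k : ℕ) + 1 ≤ j then 1 else 0

/-- The root set `Φ_{r,Z}`. -/
def Phi (r : ℕ) (Z : Finset ℕ) : Set (Fin r → ℤ) :=
  {v | ∃ i j, 1 ≤ i ∧ i < j ∧ j ≤ r ∧ v = eta r i (j - 1)} ∪
  {v | ∃ i, 1 ≤ i ∧ i < r ∧ v = eta r i (r - 2) + alphaV r r} ∪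
  {v | ∃ i j, 1 ≤ i ∧ i < j ∧ j < r ∧ v = eta r i r + eta r j (r - 2)} ∪
  {v | ∃ j ∈ Z, v = eta r j r + eta r j (r - 2)}

/-- The root set `Ψ_{r,Y}`. -/
def Psi (r : ℕ) (Y : Finset ℕ) : Set (Fin r → ℤ) :=
  {v | ∃ i j, 1 ≤ i ∧ i ≤ j ∧ j ≤ r ∧ v = eta r i j} ∪
  {v | ∃ i j, 1 ≤ i ∧ i < j ∧ j < r ∧ v = eta r i r + eta r j (r - 1)} ∪
  {v | ∃ j ∈ Y, v = eta r j r + eta r j (r - 1)}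

/-!
Along the chain `α_i, …, α_j` the map `w` telescopes: `w η_{i,j} = e_i - e_{j+1}` for `j < r`,
and `w η_{i,r} = e_i + e_{r-1}`. Hence the four families of `Φ_{r,Z}` go to `e_i - e_j`,
to `e_i + e_r`, to `e_i + e_j` with `j < r`, and to `2 e_j`, which together are exactly the target.
Injectivity holds because `w` has an integral inverse up to the factor `2`:
`α_k ↦ η_{k,r} + η_{k,r-2}` for `k < r` and `α_r ↦ α_r - α_{r-1}`; as `ℤ^r` is torsion-free,
`w` is injective.
-/

lemma eta_succ_right {r i j : ℕ} (hij : i ≤ j + 1) :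
    eta r i (j + 1) = eta r i j + alphaV r (j + 1) := by
  funext k
  simp only [eta, alphaV, Pi.add_apply]
  split_ifs <;> omega

lemma eta_of_lt {r i j : ℕ} (h : j < i) : eta r i j = 0 := by
  funext k
  simp only [eta, Pi.zero_apply, ite_eq_right_iff]
  omega

lemma basisFun_eq_alphaV (r : ℕ) (k : Fin r) : Pi.basisFun ℤ (Fin r) k = alphaV r (k + 1) := by
  funext m
  simp [alphaV, Pi.single_apply, Fin.ext_iff]

lemma exists_fin_val_succ_eq {r a : ℕ} (h1 : 1 ≤ a) (h2 : a ≤ r) : ∃ k : Fin r, (k : ℕ) + 1 = a :=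
  ⟨⟨a - 1, by omega⟩, by simp only; omega⟩

lemma LinearMap.ext_alphaV {r : ℕ} {M : Type*} [AddCommGroup M] [Module ℤ M]
    {f g : (Fin r → ℤ) →ₗ[ℤ] M} (h : ∀ a, 1 ≤ a → a ≤ r → f (alphaV r a) = g (alphaV r a)) :
    f = g :=
  (Pi.basisFun ℤ (Fin r)).ext fun k => by
    rw [basisFun_eq_alphaV]
    exact h _ (by omega) k.isLt

noncomputable def doubleInv (r : ℕ) : (Fin r → ℤ) →ₗ[ℤ] (Fin r → ℤ) :=
  (Pi.basisFun ℤ (Fin r)).constr ℤ fun k =>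
    if (k : ℕ) + 1 < r then eta r (k + 1) r + eta r (k + 1) (r - 2)
    else alphaV r r - alphaV r (r - 1)

lemma doubleInv_alphaV {r a : ℕ} (ha : 1 ≤ a) (har : a ≤ r) :
    doubleInv r (alphaV r a) =
      if a < r then eta r a r + eta r a (r - 2) else alphaV r r - alphaV r (r - 1) := by
  obtain ⟨k, rfl⟩ := exists_fin_val_succ_eq ha har
  rw [← basisFun_eq_alphaV, doubleInv, Module.Basis.constr_basis]

lemma doubleInv_alphaV_of_lt {r a : ℕ} (ha : 1 ≤ a) (har : a < r) :
    doubleInv r (alphaV r a) = eta r a r + eta r a (r - 2) := by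
  rw [doubleInv_alphaV ha har.le, if_pos har]

lemma doubleInv_alphaV_self {r : ℕ} (hr : 1 ≤ r) :
    doubleInv r (alphaV r r) = alphaV r r - alphaV r (r - 1) := by
  rw [doubleInv_alphaV hr le_rfl, if_neg (lt_irrefl r)]

section

variable {r : ℕ} {w : (Fin r → ℤ) →ₗ[ℤ] (Fin r → ℤ)}

lemma map_eta (hw1 : ∀ k, 1 ≤ k → k ≤ r - 1 → w (alphaV r k) = alphaV r k - alphaV r (k + 1))
    {i j : ℕ} (hi : 1 ≤ i) (hij : i ≤ j + 1) (hj : j ≤ r - 1) :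
    w (eta r i j) = alphaV r i - alphaV r (j + 1) := by
  induction j with
  | zero => rw [eta_of_lt (by omega), map_zero, show i = 1 by omega, sub_self]
  | succ j ih =>
    rcases Nat.lt_or_ge (j + 1) i with hlt | hle
    · rw [eta_of_lt hlt, map_zero, show i = j + 2 by omega, sub_self]
    · rw [eta_succ_right hle, map_add, ih hle (by omega), hw1 (j + 1) (by omega) hj]
      abel

lemma map_eta_top (hw1 : ∀ k, 1 ≤ k → k ≤ r - 1 → w (alphaV r k) = alphaV r k - alphaV r (k + 1))
    (hw2 : w (alphaV r r) = alphaV r (r - 1) + alphaV r r) {i : ℕ} (hi : 1 ≤ i) (hir : i ≤ r) :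
    w (eta r i r) = alphaV r i + alphaV r (r - 1) := by
  obtain ⟨s, rfl⟩ : ∃ s, r = s + 1 := ⟨r - 1, by omega⟩
  rw [eta_succ_right hir, map_add, map_eta hw1 hi (by omega) (by omega), hw2]
  simp only [Nat.add_sub_cancel]
  abel

lemma map_eta_add_alphaV_self
    (hw1 : ∀ k, 1 ≤ k → k ≤ r - 1 → w (alphaV r k) = alphaV r k - alphaV r (k + 1))
    (hw2 : w (alphaV r r) = alphaV r (r - 1) + alphaV r r) {i : ℕ} (hi : 1 ≤ i) (hir : i < r) :
    w (eta r i (r - 2) + alphaV r r) = alphaV r i + alphaV r r := by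
  rw [map_add, map_eta hw1 hi (by omega) (by omega), hw2, show r - 2 + 1 = r - 1 by omega]
  abel

lemma map_eta_top_add_eta
    (hw1 : ∀ k, 1 ≤ k → k ≤ r - 1 → w (alphaV r k) = alphaV r k - alphaV r (k + 1))
    (hw2 : w (alphaV r r) = alphaV r (r - 1) + alphaV r r) {i j : ℕ} (hi : 1 ≤ i) (hir : i ≤ r)
    (hj : 1 ≤ j) (hjr : j < r) :
    w (eta r i r + eta r j (r - 2)) = alphaV r i + alphaV r j := by
  rw [map_add, map_eta_top hw1 hw2 hi hir, map_eta hw1 hj (by omega) (by omega),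
    show r - 2 + 1 = r - 1 by omega]
  abel

lemma doubleInv_comp (hr : 2 ≤ r)
    (hw1 : ∀ k, 1 ≤ k → k ≤ r - 1 → w (alphaV r k) = alphaV r k - alphaV r (k + 1))
    (hw2 : w (alphaV r r) = alphaV r (r - 1) + alphaV r r) :
    doubleInv r ∘ₗ w = (2 : ℤ) • LinearMap.id := by
  refine LinearMap.ext_alphaV fun a ha har => ?_
  rw [LinearMap.comp_apply, LinearMap.smul_apply, LinearMap.id_apply]
  obtain hlt | heq | rfl : a + 1 < r ∨ a + 1 = r ∨ a = r := by omega
  · rw [hw1 a ha (by omega), map_sub, doubleInv_alphaV_of_lt ha (by omega),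
      doubleInv_alphaV_of_lt (by omega) hlt]
    ext k
    simp only [eta, alphaV, Pi.add_apply, Pi.sub_apply, Pi.smul_apply, smul_eq_mul]
    split_ifs <;> omega
  · rw [hw1 a ha (by omega), map_sub, doubleInv_alphaV_of_lt ha (by omega), heq,
      doubleInv_alphaV_self (by omega), show a = r - 1 by omega]
    ext k
    simp only [eta, alphaV, Pi.add_apply, Pi.sub_apply, Pi.smul_apply, smul_eq_mul]
    split_ifs <;> omega
  · rw [hw2, map_add, doubleInv_alphaV_of_lt (by omega) (by omega), doubleInv_alphaV_self ha]
    ext k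
    simp only [eta, alphaV, Pi.add_apply, Pi.sub_apply, Pi.smul_apply, smul_eq_mul]
    split_ifs <;> omega

lemma injective_of_map_alphaV (hr : 2 ≤ r)
    (hw1 : ∀ k, 1 ≤ k → k ≤ r - 1 → w (alphaV r k) = alphaV r k - alphaV r (k + 1))
    (hw2 : w (alphaV r r) = alphaV r (r - 1) + alphaV r r) :
    Function.Injective w := by
  intro x y hxy
  have h2 : (2 : ℤ) • x = (2 : ℤ) • y := by
    simpa only [← LinearMap.comp_apply, doubleInv_comp hr hw1 hw2, LinearMap.smul_apply,
      LinearMap.id_apply] using congrArg (doubleInv r) hxy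
  exact smul_right_injective _ two_ne_zero h2

end

theorem phi_image (r : ℕ) (hr : 3 ≤ r) (Z : Finset ℕ) (hZ : Z ⊆ Finset.Icc 1 (r - 1))
    (w : (Fin r → ℤ) →ₗ[ℤ] (Fin r → ℤ))
    (hw1 : ∀ k, 1 ≤ k → k ≤ r - 1 → w (alphaV r k) = alphaV r k - alphaV r (k + 1))
    (hw2 : w (alphaV r r) = alphaV r (r - 1) + alphaV r r) :
    Set.BijOn w (Phi r Z)
      ({v | ∃ i j, 1 ≤ i ∧ i < j ∧ j ≤ r ∧ v = alphaV r i - alphaV r j} ∪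
       {v | ∃ i j, 1 ≤ i ∧ i < j ∧ j ≤ r ∧ v = alphaV r i + alphaV r j} ∪
       {v | ∃ j ∈ Z, v = (2 : ℤ) • alphaV r j}) := by
  have hSub : ∀ i j, 1 ≤ i → i < j → j ≤ r → w (eta r i (j - 1)) = alphaV r i - alphaV r j :=
    fun i j hi hij hjr => by
      rw [map_eta hw1 hi (by omega) (by omega), Nat.sub_add_cancel (by omega)]
  have hTwice : ∀ j ∈ Z, w (eta r j r + eta r j (r - 2)) = (2 : ℤ) • alphaV r j := fun j hjZ => by
    obtain ⟨hj, hjr⟩ := Finset.mem_Icc.mp (hZ hjZ)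
    rw [map_eta_top_add_eta hw1 hw2 hj (by omega) hj (by omega), two_smul]
  refine ⟨?_, (injective_of_map_alphaV (by omega) hw1 hw2).injOn, ?_⟩
  · rintro v (((⟨i, j, hi, hij, hjr, rfl⟩ | ⟨i, hi, hir, rfl⟩) | ⟨i, j, hi, hij, hjr, rfl⟩) |
      ⟨j, hjZ, rfl⟩)
    · exact .inl (.inl ⟨i, j, hi, hij, hjr, hSub i j hi hij hjr⟩)
    · exact .inl (.inr ⟨i, r, hi, hir, le_rfl, map_eta_add_alphaV_self hw1 hw2 hi hir⟩)
    · exact .inl (.inr ⟨i, j, hi, hij, hjr.le,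
        map_eta_top_add_eta hw1 hw2 hi (by omega) (by omega) hjr⟩)
    · exact .inr ⟨j, hjZ, hTwice j hjZ⟩
  · rintro t ((⟨i, j, hi, hij, hjr, rfl⟩ | ⟨i, j, hi, hij, hjr, rfl⟩) | ⟨j, hjZ, rfl⟩)
    · exact ⟨_, .inl (.inl (.inl ⟨i, j, hi, hij, hjr, rfl⟩)), hSub i j hi hij hjr⟩
    · obtain rfl | hjr := eq_or_lt_of_le hjr
      · exact ⟨_, .inl (.inl (.inr ⟨i, hi, hij, rfl⟩)), map_eta_add_alphaV_self hw1 hw2 hi hij⟩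
      · exact ⟨_, .inl (.inr ⟨i, j, hi, hij, hjr, rfl⟩),
          map_eta_top_add_eta hw1 hw2 hi (by omega) (by omega) hjr⟩
    · exact ⟨_, .inr ⟨j, hjZ, rfl⟩, hTwice j hjZ⟩
end

section
/- The Cartan matrix C = (c_{ij}) associated to Φ_{r,Z} is given by: c_{ii} = 2; c_{ij} = -1 if |i-j| = 1 and i,j ≤ r-1; c_{r-2,r} = c_{r,r-2} = -1; c_{r-1,r} = c_{r,r-1} = -1 if r-1 ∈ Z and 0 if r-1 ∉ Z; and c_{ij} = 0 in all remaining cases with i ≠ j. Here c_{ij} for i ≠ j is defined by c_{ij} = -max{ k ∈ ℕ₀ : kα_i + α_j ∈ Φ_{r,Z} }. -/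
/-!
For `i ≠ j` and `k ≥ 1` the vector `k α_i + α_j` has exactly two nonzero coordinates, and
comparing a few coordinates shows which members of `Φ_{r,Z}` have that shape: an `η_{a,b}` only
when it is `α_a + α_{a+1}` with `a + 1 ≤ r - 1`, an `η_{a,r-2} + α_r` only for `a = r - 2`, an
`η_{a,r} + η_{b,r-2}` never (it is nonzero at `a`, `r - 1` and `r`), and an `η_{b,r} + η_{b,r-2}`
with `1 ≤ b ≤ r - 1` only for `b = r - 1`. All of these have coefficients `1`, so `k ≤ 1`, with
`k = 1` exactly on the edges of the Dynkin diagram; `k = 0` always occurs since every `α_j` lies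
in `Φ_{r,Z}`. Hence the set whose supremum defines `-c_{ij}` is `{0, 1}` or `{0}`.
-/

section

variable {r : ℕ}

lemma smul_alphaV_add_alphaV_eq_eta {k i j a b : ℕ} (hk : k ≠ 0)
    (hi : 1 ≤ i) (hir : i ≤ r) (hj : 1 ≤ j) (hjr : j ≤ r) (ha : 1 ≤ a) (hab : a < b) (hbr : b ≤ r)
    (h : (k : ℤ) • alphaV r i + alphaV r j = eta r a (b - 1)) :
    k = 1 ∧ b = a + 2 ∧ (i = a ∧ j = a + 1 ∨ i = a + 1 ∧ j = a) := by
  -- `⟨q - 1, _⟩ : Fin r` is the coordinate `q` of the 1-indexed notation `α_q`, `η_{a,b}`.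
  simp only [funext_iff, Pi.add_apply, Pi.smul_apply, smul_eq_mul, alphaV, eta] at h
  have := h ⟨i - 1, by omega⟩
  have := h ⟨j - 1, by omega⟩
  have := h ⟨a - 1, by omega⟩
  have := h ⟨a, by omega⟩
  have := h ⟨b - 2, by omega⟩
  clear h
  grind

lemma smul_alphaV_add_alphaV_eq_eta_add_alphaV {k i j a : ℕ} (hk : k ≠ 0)
    (hi : 1 ≤ i) (hir : i ≤ r) (hj : 1 ≤ j) (hjr : j ≤ r) (ha : 1 ≤ a) (har : a < r)
    (h : (k : ℤ) • alphaV r i + alphaV r j = eta r a (r - 2) + alphaV r r) :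
    k = 1 ∧ a = r - 2 ∧ (i = a ∧ j = r ∨ i = r ∧ j = a) := by
  simp only [funext_iff, Pi.add_apply, Pi.smul_apply, smul_eq_mul, alphaV, eta] at h
  have := h ⟨i - 1, by omega⟩
  have := h ⟨j - 1, by omega⟩
  have := h ⟨a - 1, by omega⟩
  have := h ⟨a, by omega⟩
  have := h ⟨r - 1, by omega⟩
  clear h
  grind

lemma smul_alphaV_add_alphaV_ne_eta_add_eta (k i j : ℕ) {a b : ℕ} (ha : 1 ≤ a) (hab : a < b)
    (hbr : b < r) : (k : ℤ) • alphaV r i + alphaV r j ≠ eta r a r + eta r b (r - 2) := by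
  intro h
  simp only [funext_iff, Pi.add_apply, Pi.smul_apply, smul_eq_mul, alphaV, eta] at h
  have := h ⟨a - 1, by omega⟩
  have := h ⟨r - 2, by omega⟩
  have := h ⟨r - 1, by omega⟩
  clear h
  grind

lemma smul_alphaV_add_alphaV_eq_eta_add_eta_self {k i j b : ℕ} (hb : 1 ≤ b) (hbr : b < r)
    (h : (k : ℤ) • alphaV r i + alphaV r j = eta r b r + eta r b (r - 2)) :
    k = 1 ∧ b = r - 1 ∧ (i = b ∧ j = r ∨ i = r ∧ j = b) := by
  simp only [funext_iff, Pi.add_apply, Pi.smul_apply, smul_eq_mul, alphaV, eta] at h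
  have := h ⟨b - 1, by omega⟩
  have := h ⟨r - 2, by omega⟩
  have := h ⟨r - 1, by omega⟩
  clear h
  grind

def IsDynkinEdge (r : ℕ) (Z : Finset ℕ) (i j : ℕ) : Prop :=
  ((j = i + 1 ∨ i = j + 1) ∧ i ≤ r - 1 ∧ j ≤ r - 1) ∨
  ((i = r - 2 ∧ j = r) ∨ (i = r ∧ j = r - 2)) ∨
  (((i = r - 1 ∧ j = r) ∨ (i = r ∧ j = r - 1)) ∧ r - 1 ∈ Z)

lemma alphaV_mem_Phi (Z : Finset ℕ) {j : ℕ} (hj : 1 ≤ j) (hjr : j ≤ r) (hr : 2 ≤ r) :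
    alphaV r j ∈ Phi r Z := by
  rcases hjr.lt_or_eq with hjr | rfl
  · refine Or.inl (Or.inl (Or.inl ⟨j, j + 1, hj, by omega, by omega, ?_⟩))
    ext x; simp only [alphaV, eta]; split_ifs <;> omega
  · refine Or.inl (Or.inl (Or.inr ⟨j - 1, by omega, by omega, ?_⟩))
    ext x; simp only [Pi.add_apply, alphaV, eta]; split_ifs <;> omega

lemma alphaV_add_alphaV_mem_Phi {Z : Finset ℕ} {i j : ℕ} (hi : 1 ≤ i) (hj : 1 ≤ j)
    (h : IsDynkinEdge r Z i j) : alphaV r i + alphaV r j ∈ Phi r Z := by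
  rcases h with ⟨hij, hir, hjr⟩ | hij | ⟨hij, hZ⟩
  · refine Or.inl (Or.inl (Or.inl ⟨min i j, min i j + 2, by omega, by omega, by omega, ?_⟩))
    ext x; simp only [Pi.add_apply, alphaV, eta]; split_ifs <;> omega
  · refine Or.inl (Or.inl (Or.inr ⟨r - 2, by omega, by omega, ?_⟩))
    ext x; simp only [Pi.add_apply, alphaV, eta]; split_ifs <;> omega
  · refine Or.inr ⟨r - 1, hZ, ?_⟩
    ext x; simp only [Pi.add_apply, alphaV, eta]; split_ifs <;> omega

lemma smul_alphaV_add_alphaV_mem_Phi_iff {Z : Finset ℕ} (hZ : Z ⊆ Finset.Icc 1 (r - 1))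
    {i j : ℕ} (hi : 1 ≤ i) (hir : i ≤ r) (hj : 1 ≤ j) (hjr : j ≤ r) (hij : i ≠ j) (k : ℕ) :
    (k : ℤ) • alphaV r i + alphaV r j ∈ Phi r Z ↔ k = 0 ∨ k = 1 ∧ IsDynkinEdge r Z i j := by
  constructor
  · intro hmem
    by_cases hk : k = 0
    · exact Or.inl hk
    right
    rcases hmem with (((⟨a, b, ha, hab, hbr, h⟩ | ⟨a, ha, har, h⟩) | ⟨a, b, ha, hab, hbr, h⟩) |
      ⟨b, hbZ, h⟩)
    · obtain ⟨rfl, rfl, hij⟩ := smul_alphaV_add_alphaV_eq_eta hk hi hir hj hjr ha hab hbr h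
      exact ⟨rfl, Or.inl (by omega)⟩
    · obtain ⟨rfl, rfl, hij⟩ :=
        smul_alphaV_add_alphaV_eq_eta_add_alphaV hk hi hir hj hjr ha har h
      exact ⟨rfl, Or.inr (Or.inl (by omega))⟩
    · exact (smul_alphaV_add_alphaV_ne_eta_add_eta k i j ha hab hbr h).elim
    · obtain ⟨hb, hbr⟩ := Finset.mem_Icc.mp (hZ hbZ)
      obtain ⟨rfl, rfl, hij⟩ :=
        smul_alphaV_add_alphaV_eq_eta_add_eta_self hb (by omega) h
      exact ⟨rfl, Or.inr (Or.inr ⟨by omega, hbZ⟩)⟩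
  · rintro (rfl | ⟨rfl, hedge⟩)
    · simpa using alphaV_mem_Phi Z hj hjr (by omega)
    · simpa using alphaV_add_alphaV_mem_Phi hi hj hedge

lemma Nat.sSup_setOf_eq_zero_or_eq_one_and (P : Prop) [Decidable P] :
    sSup {k : ℕ | k = 0 ∨ k = 1 ∧ P} = if P then 1 else 0 := by
  split_ifs with hP
  · simp only [hP, and_true]
    exact (csSup_pair 0 1).trans (max_eq_right zero_le_one)
  · simp [hP]

end

theorem phi_cartan_general (r : ℕ) (Z : Finset ℕ) (hZ : Z ⊆ Finset.Icc 1 (r - 1))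
    (c : ℕ → ℕ → ℤ)
    (hdiag : ∀ i, c i i = 2)
    (hoff : ∀ i j, i ≠ j →
      c i j = -((sSup {k : ℕ | (k : ℤ) • alphaV r i + alphaV r j ∈ Phi r Z} : ℕ) : ℤ)) :
    ∀ i j, 1 ≤ i → i ≤ r → 1 ≤ j → j ≤ r →
      c i j =
        if i = j then 2
        else if (j = i + 1 ∨ i = j + 1) ∧ i ≤ r - 1 ∧ j ≤ r - 1 then -1
        else if (i = r - 2 ∧ j = r) ∨ (i = r ∧ j = r - 2) then -1
        else if (i = r - 1 ∧ j = r) ∨ (i = r ∧ j = r - 1) then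
          (if r - 1 ∈ Z then -1 else 0)
        else 0 := by
  intro i j hi hir hj hjr
  by_cases hij : i = j
  · subst hij
    rw [hdiag, if_pos rfl]
  have hroots : {k : ℕ | (k : ℤ) • alphaV r i + alphaV r j ∈ Phi r Z} =
      {k | k = 0 ∨ k = 1 ∧ IsDynkinEdge r Z i j} :=
    Set.ext (smul_alphaV_add_alphaV_mem_Phi_iff hZ hi hir hj hjr hij)
  classical
  rw [hoff i j hij, hroots, Nat.sSup_setOf_eq_zero_or_eq_one_and, if_neg hij, IsDynkinEdge]
  split_ifs <;> grind

theorem phi_cartan (r : ℕ) (hr : 4 ≤ r) (Z : Finset ℕ) (hZ : Z ⊆ Finset.Icc 1 (r - 1))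
    (c : ℕ → ℕ → ℤ)
    (hdiag : ∀ i, c i i = 2)
    (hoff : ∀ i j, i ≠ j →
      c i j = -((sSup {k : ℕ | (k : ℤ) • alphaV r i + alphaV r j ∈ Phi r Z} : ℕ) : ℤ)) :
    ∀ i j, 1 ≤ i → i ≤ r → 1 ≤ j → j ≤ r →
      c i j =
        if i = j then 2
        else if (j = i + 1 ∨ i = j + 1) ∧ i ≤ r - 1 ∧ j ≤ r - 1 then -1
        else if (i = r - 2 ∧ j = r) ∨ (i = r ∧ j = r - 2) then -1
        else if (i = r - 1 ∧ j = r) ∨ (i = r ∧ j = r - 1) then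
          (if r - 1 ∈ Z then -1 else 0)
        else 0 :=
  phi_cartan_general r Z hZ c hdiag hoff
end

section
/- Let r ≥ 4 and let a_1, …, a_r be nonnegative integers satisfying: a_2 - a_1 ≥ a_1; a_{k+1} - a_k + a_{k-1} ≥ a_k for all 2 ≤ k ≤ r-3; (a_r + a_{r-1}) - a_{r-2} + a_{r-3} ≥ a_{r-2}; and a_{r-2} ≥ a_{r-1} + a_r. Then a_1 = a_2 = ⋯ = a_r = 0. -/
/-!
Write `d k = a (k + 1) - a k`. The hypotheses say `a 1 ≤ d 1 ≤ d 2 ≤ ⋯ ≤ d (r - 3)` and, combining the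
last two, `d (r - 3) ≤ 0`. Since `a 1 ≥ 0`, the whole chain collapses to `0`, so `a 1 = ⋯ = a (r - 2) = 0`,
and then `0 ≤ a (r - 1) + a r ≤ a (r - 2) = 0` kills the last two entries.
-/

theorem eq_zero_of_le_sub_of_monotoneOn_sub {a : ℕ → ℤ} {n : ℕ} (hn : 1 ≤ n) (h0 : 0 ≤ a 1)
    (h1 : a 1 ≤ a 2 - a 1) (hmono : MonotoneOn (fun k ↦ a (k + 1) - a k) (Set.Icc 1 n))
    (hlast : a (n + 1) - a n ≤ 0) :
    ∀ k, 1 ≤ k → k ≤ n + 1 → a k = 0 := by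
  have hd1 : a 1 ≤ a (n + 1) - a n := h1.trans (hmono ⟨le_rfl, hn⟩ ⟨hn, le_rfl⟩ hn)
  have ha1 : a 1 = 0 := by omega
  have hd : ∀ k ∈ Set.Icc 1 n, a (k + 1) = a k := fun k hk ↦ by
    have hlow := h1.trans (hmono ⟨le_rfl, hn⟩ hk hk.1)
    have hhigh := hmono hk ⟨hn, le_rfl⟩ hk.2
    simp only at hlow hhigh
    omega
  intro k hk hkn
  induction k, hk using Nat.le_induction with
  | base => exact ha1
  | succ k hk ih => rw [hd k ⟨hk, by omega⟩, ih (by omega)]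

theorem height_argument (r : ℕ) (hr : 4 ≤ r) (a : ℕ → ℤ)
    (hpos : ∀ k, 1 ≤ k → k ≤ r → 0 ≤ a k)
    (h1 : a 1 ≤ a 2 - a 1)
    (h2 : ∀ k, 2 ≤ k → k ≤ r - 3 → a k ≤ a (k + 1) - a k + a (k - 1))
    (h3 : a (r - 2) ≤ (a r + a (r - 1)) - a (r - 2) + a (r - 3))
    (h4 : a (r - 1) + a r ≤ a (r - 2)) :
    ∀ k, 1 ≤ k → k ≤ r → a k = 0 := by
  have hr2 : r - 3 + 1 = r - 2 := by omega
  have hmono : MonotoneOn (fun k ↦ a (k + 1) - a k) (Set.Icc 1 (r - 3)) :=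
    monotoneOn_of_le_add_one Set.ordConnected_Icc fun k _ hk hk₁ ↦ by
      have := h2 (k + 1) (Nat.succ_le_succ hk.1) hk₁.2
      simp only [Nat.add_sub_cancel] at this ⊢
      linarith
  have hlast : a (r - 3 + 1) - a (r - 3) ≤ 0 := by rw [hr2]; linarith
  have hinit := eq_zero_of_le_sub_of_monotoneOn_sub (by omega) (hpos 1 le_rfl (by omega)) h1
    hmono hlast
  rw [hr2] at hinit
  have htail₁ := hpos (r - 1) (by omega) (by omega)
  have htail₂ := hpos r (by omega) le_rfl
  have hr2_zero := hinit (r - 2) (by omega) le_rfl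
  intro k hk hkr
  rcases (by omega : k ≤ r - 2 ∨ k = r - 1 ∨ k = r) with hk' | rfl | rfl
  · exact hinit k hk hk'
  all_goals linarith
end
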